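/- Let d ≥ 1 and let f : {0,1}^d → ℤ satisfy |f(u) − f(v)| ≤ 1 whenever u and v differ in exactly one coordinate. Let F : {0,…,d}^d → ℚ be the multilinear interpolation of f taken with N = d, and define γ : {0,…,d}^d × {0,…,d} → ℚ by γ(a, k) = (1 − k/d)·F(a) + (k/d)·f(ā), where ā ∈ {0,1}^d is given by ā_i = 0 if a_i = 0 and ā_i = 1 if a_i ≥ 1. Then any two points of the (d+1)-dimensional grid {0,…,d}^{d+1} that differ by 1 in exactly one coordinate have γ-values differing by at most 1 in absolute value. -/

import Mathlib

noncomputable section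

/-- The multilinear interpolation of `f : {0,1}^d → ℤ` on the grid `{0,…,N}^d`:
`F(a) = Σ_{ε ∈ {0,1}^d} (Π_i w_i) · f(ε)` with `w_i = a_i/N` if `ε_i = 1` and
`w_i = 1 − a_i/N` if `ε_i = 0`. -/
def interp (d N : ℕ) (f : (Fin d → Bool) → ℤ) (a : Fin d → ℕ) : ℚ :=
  ∑ ε : Fin d → Bool,
    (∏ i : Fin d, (if ε i then (a i : ℚ) / N else 1 - (a i : ℚ) / N)) * (f ε : ℚ)

/-- Two vertices of the discrete cube differ in exactly one coordinate. -/
def CubeAdj {d : ℕ} (u v : Fin d → Bool) : Prop :=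
  ∃ j, u j ≠ v j ∧ ∀ k, k ≠ j → u k = v k

/-- Two grid points differ by `1` in exactly one coordinate. -/
def GridAdj {d : ℕ} (a b : Fin d → ℕ) : Prop :=
  ∃ j, (a j = b j + 1 ∨ b j = a j + 1) ∧ ∀ k, k ≠ j → a k = b k

/-- `ā ∈ {0,1}^d`, where `ā_i = 0` if `a_i = 0` and `ā_i = 1` if `a_i ≥ 1`. -/
def barMap {d : ℕ} (a : Fin d → ℕ) : Fin d → Bool := fun i => decide (1 ≤ a i)

/-- The labeling `γ` of the prism grid `{0,…,d}^d × {0,…,d}`: the bottom face (`k = 0`)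
is the multilinear interpolation `F` (with `N = d`), the top face (`k = d`) is `a ↦ f(ā)`,
linearly interpolated in `d` equal steps along each vertical line. -/
def gammaLabel (d : ℕ) (f : (Fin d → Bool) → ℤ) (a : Fin d → ℕ) (k : ℕ) : ℚ :=
  (1 - (k : ℚ) / d) * interp d d f a + ((k : ℚ) / d) * (f (barMap a) : ℚ)

/-!
The weights `cubeWeight p ε` of the multilinear interpolation form a probability distribution
on the cube, and the interpolant is affine in each `p j` with slope a weighted average of the
discrete partial derivatives of `f`; so a unit step of the grid moves `F` by at most `1/N`.
Walking along a shortest path shows that `f` is `1`-Lipschitz for the Hamming distance, so the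
weighted average `F(a)` lies within `d` of `f(ā)`. A horizontal step of `γ` is a convex
combination of a step of `F` and a step of `f ∘ bar`, and a vertical step equals
`(f(ā) - F(a)) / d`.
-/

open Finset Function

section CubeWeight

variable {R : Type*} {ι : Type*} [Fintype ι]

section CommRing

variable [CommRing R]

def cubeWeight (p : ι → R) (ε : ι → Bool) : R :=
  ∏ i, if ε i then p i else 1 - p i

variable [DecidableEq ι]

lemma sum_cubeWeight (p : ι → R) : ∑ ε, cubeWeight p ε = 1 := by
  rw [← prod_eq_one (s := univ) fun i _ =>
    show ∑ b : Bool, (if b then p i else 1 - p i) = 1 by simp, Fintype.prod_sum]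
  rfl

lemma cubeWeight_update_update (p : ι → R) (ε : ι → Bool) (j : ι) (c : R) (b : Bool) :
    cubeWeight (update p j c) (update ε j b) =
      (if b then c else 1 - c) * ∏ i ∈ {j}ᶜ, if ε i then p i else 1 - p i := by
  rw [cubeWeight, Fintype.prod_eq_mul_prod_compl j]
  simp only [update_self]
  congr 1
  refine prod_congr rfl fun i hi => ?_
  rw [update_of_ne (by simpa using hi), update_of_ne (by simpa using hi)]

lemma cubeWeight_eq_affine (p : ι → R) (ε : ι → Bool) (j : ι) :
    cubeWeight p ε =
      (1 - p j) * cubeWeight (update p j 0) ε + p j * cubeWeight (update p j 1) ε := by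
  conv_rhs => rw [← update_eq_self j ε]
  conv_lhs => rw [← update_eq_self j ε, ← update_eq_self j p]
  simp only [cubeWeight_update_update]
  cases ε j <;> simp

lemma cubeWeight_update_zero_flip (p : ι → R) (ε : ι → Bool) (j : ι) :
    cubeWeight (update p j 0) (update ε j (!ε j)) = cubeWeight (update p j 1) ε := by
  conv_rhs => rw [← update_eq_self j ε]
  simp only [cubeWeight_update_update]
  cases ε j <;> simp

lemma sum_cubeWeight_mul_eq_affine (p : ι → R) (g : (ι → Bool) → R) (j : ι) :
    ∑ ε, cubeWeight p ε * g ε =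
      (1 - p j) * ∑ ε, cubeWeight (update p j 0) ε * g ε +
        p j * ∑ ε, cubeWeight (update p j 1) ε * g ε := by
  simp only [cubeWeight_eq_affine p _ j, add_mul, sum_add_distrib, mul_sum, mul_assoc]

lemma sum_cubeWeight_update_one_sub_zero (p : ι → R) (g : (ι → Bool) → R) (j : ι) :
    ∑ ε, cubeWeight (update p j 1) ε * g ε - ∑ ε, cubeWeight (update p j 0) ε * g ε =
      ∑ ε, cubeWeight (update p j 1) ε * (g ε - g (update ε j (!ε j))) := by
  have hflip : Involutive fun ε : ι → Bool => update ε j (!ε j) := fun ε => by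
    ext i; rcases eq_or_ne i j with rfl | hi <;> simp [update_of_ne, *]
  rw [← Fintype.sum_bijective _ hflip.bijective
    (fun ε => cubeWeight (update p j 1) ε * g (update ε j (!ε j)))
    (fun ε => cubeWeight (update p j 0) ε * g ε)
    fun ε => by rw [cubeWeight_update_zero_flip]]
  simp only [mul_sub, sum_sub_distrib]

end CommRing

variable [CommRing R] [LinearOrder R] [IsStrictOrderedRing R]

lemma cubeWeight_nonneg {p : ι → R} (hp₀ : ∀ i, 0 ≤ p i) (hp₁ : ∀ i, p i ≤ 1)
    (ε : ι → Bool) : 0 ≤ cubeWeight p ε :=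
  prod_nonneg fun i _ => by split_ifs <;> linarith [hp₀ i, hp₁ i]

lemma abs_sum_mul_sub_le {α : Type*} (s : Finset α) {w g : α → R} {c M : R}
    (hw₀ : ∀ i ∈ s, 0 ≤ w i) (hw₁ : ∑ i ∈ s, w i = 1) (hg : ∀ i ∈ s, |g i - c| ≤ M) :
    |∑ i ∈ s, w i * g i - c| ≤ M :=
  calc |∑ i ∈ s, w i * g i - c| = |∑ i ∈ s, w i * (g i - c)| := by
        simp only [mul_sub, sum_sub_distrib, ← sum_mul, hw₁, one_mul]
    _ ≤ ∑ i ∈ s, w i * M := by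
        refine (abs_sum_le_sum_abs _ _).trans (sum_le_sum fun i hi => ?_)
        rw [abs_mul, abs_of_nonneg (hw₀ i hi)]
        exact mul_le_mul_of_nonneg_left (hg i hi) (hw₀ i hi)
    _ = M := by rw [← sum_mul, hw₁, one_mul]

variable [DecidableEq ι]

lemma abs_sum_cubeWeight_mul_sub_le {p q : ι → R} {j : ι} (hpq : ∀ i, i ≠ j → p i = q i)
    (hp₀ : ∀ i, 0 ≤ p i) (hp₁ : ∀ i, p i ≤ 1) {g : (ι → Bool) → R}
    (hg : ∀ ε, |g ε - g (update ε j (!ε j))| ≤ 1) :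
    |∑ ε, cubeWeight p ε * g ε - ∑ ε, cubeWeight q ε * g ε| ≤ |p j - q j| := by
  have hq : ∀ c, update q j c = update p j c := fun c => by
    ext i; rcases eq_or_ne i j with rfl | hi
    · simp
    · simp [update_of_ne hi, hpq i hi]
  have hp₁₀ : ∀ i, 0 ≤ update p j 1 i := fun i => by
    rw [update_apply]; split_ifs <;> simp [hp₀]
  have hp₁₁ : ∀ i, update p j 1 i ≤ 1 := fun i => by
    rw [update_apply]; split_ifs <;> simp [hp₁]
  have hslope : |∑ ε, cubeWeight (update p j 1) ε * (g ε - g (update ε j (!ε j)))| ≤ 1 := by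
    simpa using abs_sum_mul_sub_le univ (c := 0) (fun ε _ => cubeWeight_nonneg hp₁₀ hp₁₁ ε)
      (sum_cubeWeight _) fun ε _ => by simpa using hg ε
  rw [sum_cubeWeight_mul_eq_affine p g j, sum_cubeWeight_mul_eq_affine q g j, hq, hq]
  calc _ = |(p j - q j) * (∑ ε, cubeWeight (update p j 1) ε * g ε -
          ∑ ε, cubeWeight (update p j 0) ε * g ε)| := by ring_nf
    _ ≤ |p j - q j| := by
        rw [sum_cubeWeight_update_one_sub_zero, abs_mul]
        exact mul_le_of_le_one_right (abs_nonneg _) hslope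

end CubeWeight

section Grid

variable {d : ℕ} {f : (Fin d → Bool) → ℤ}

lemma abs_sub_le_card_of_eq_off (hf : ∀ u v : Fin d → Bool, CubeAdj u v → |f u - f v| ≤ 1)
    (s : Finset (Fin d)) {u v : Fin d → Bool} (huv : ∀ i ∉ s, u i = v i) :
    |f u - f v| ≤ #s := by
  induction s using Finset.induction_on generalizing u with
  | empty =>
    obtain rfl : u = v := funext fun i => huv i (notMem_empty i)
    simp
  | insert j s hj ih =>
    set w := update u j (v j)
    have hwv : ∀ i ∉ s, w i = v i := fun i hi => by
      rcases eq_or_ne i j with rfl | hij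
      · simp [w]
      · simp [w, update_of_ne hij, huv i (by simp [hij, hi])]
    have huw : |f u - f w| ≤ 1 := by
      by_cases h : u j = v j
      · simp [w, ← h]
      · exact hf u w ⟨j, by simpa [w], fun k hk => by simp [w, update_of_ne hk]⟩
    calc |f u - f v| ≤ |f u - f w| + |f w - f v| := abs_sub_le _ _ _
      _ ≤ 1 + #s := add_le_add huw (ih hwv)
      _ = #(insert j s) := by rw [card_insert_of_notMem hj]; push_cast; ring

lemma interp_eq_sum_cubeWeight (N : ℕ) (a : Fin d → ℕ) :
    interp d N f a = ∑ ε, cubeWeight (fun i => (a i : ℚ) / N) ε * f ε :=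
  rfl

variable (hf : ∀ u v : Fin d → Bool, CubeAdj u v → |f u - f v| ≤ 1)
include hf

lemma abs_interp_sub_le {N : ℕ} {a : Fin d → ℕ} (ha : ∀ i, a i ≤ N)
    (u : Fin d → Bool) : |interp d N f a - f u| ≤ d := by
  have ha' : ∀ i, (a i : ℚ) / N ≤ 1 := fun i =>
    div_le_one_of_le₀ (by exact_mod_cast ha i) (by positivity)
  refine abs_sum_mul_sub_le univ (fun ε _ => cubeWeight_nonneg (fun i => by positivity) ha' ε)
    (sum_cubeWeight _) fun ε _ => ?_
  have := abs_sub_le_card_of_eq_off hf univ (u := ε) (v := u) (by simp)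
  rw [card_univ, Fintype.card_fin] at this
  exact_mod_cast this

lemma abs_interp_sub_interp_le {N : ℕ} {a b : Fin d → ℕ} (ha : ∀ i, a i ≤ N)
    (hab : GridAdj a b) : |interp d N f a - interp d N f b| ≤ 1 / N := by
  obtain ⟨j, hj, hoff⟩ := hab
  have ha' : ∀ i, (a i : ℚ) / N ≤ 1 := fun i =>
    div_le_one_of_le₀ (by exact_mod_cast ha i) (by positivity)
  have hflip : ∀ ε : Fin d → Bool, |(f ε : ℚ) - f (update ε j (!ε j))| ≤ 1 := fun ε => by
    exact_mod_cast hf _ _ ⟨j, by simp, fun k hk => (update_of_ne hk _ _).symm⟩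
  calc |interp d N f a - interp d N f b| ≤ |(a j : ℚ) / N - b j / N| :=
        abs_sum_cubeWeight_mul_sub_le (fun i hi => by simp [hoff i hi])
          (fun i => by positivity) ha' hflip
    _ = 1 / N := by
        rw [← sub_div, abs_div, Nat.abs_cast]
        rcases hj with h | h <;> simp [h]

lemma abs_barMap_sub_barMap_le {a b : Fin d → ℕ} (hab : GridAdj a b) :
    |(f (barMap a) : ℚ) - f (barMap b)| ≤ 1 := by
  obtain ⟨j, -, hoff⟩ := hab
  have := abs_sub_le_card_of_eq_off hf {j} (u := barMap a) (v := barMap b)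
    fun i hi => by simp [barMap, hoff i (by simpa using hi)]
  rw [card_singleton] at this
  exact_mod_cast this

end Grid

lemma abs_one_sub_mul_add_mul_le {R : Type*} [CommRing R] [LinearOrder R] [IsStrictOrderedRing R]
    {t x y : R} (ht₀ : 0 ≤ t) (ht₁ : t ≤ 1) (hx : |x| ≤ 1) (hy : |y| ≤ 1) :
    |(1 - t) * x + t * y| ≤ 1 := by
  rw [abs_le] at *
  constructor <;> nlinarith

lemma gammaLabel_sub_gammaLabel (d : ℕ) (f : (Fin d → Bool) → ℤ) (a b : Fin d → ℕ) (k : ℕ) :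
    gammaLabel d f a k - gammaLabel d f b k =
      (1 - (k : ℚ) / d) * (interp d d f a - interp d d f b) +
        (k : ℚ) / d * ((f (barMap a) : ℚ) - f (barMap b)) := by
  unfold gammaLabel; ring

lemma gammaLabel_succ_sub (d : ℕ) (f : (Fin d → Bool) → ℤ) (a : Fin d → ℕ) (l : ℕ) :
    gammaLabel d f a (l + 1) - gammaLabel d f a l = ((f (barMap a) : ℚ) - interp d d f a) / d := by
  unfold gammaLabel; push_cast; ring

/-- **Statement 11.** Adjacent points of the `(d+1)`-dimensional grid `{0,…,d}^{d+1}` have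
`γ`-values differing by at most `1`. -/
theorem gammaLabel_step_le {d : ℕ} (hd : 1 ≤ d) (f : (Fin d → Bool) → ℤ)
    (hf : ∀ u v : Fin d → Bool, CubeAdj u v → |f u - f v| ≤ 1) :
    (∀ a b : Fin d → ℕ, ∀ k : ℕ, (∀ i, a i ≤ d) → (∀ i, b i ≤ d) → k ≤ d →
      GridAdj a b → |gammaLabel d f a k - gammaLabel d f b k| ≤ 1) ∧
    (∀ a : Fin d → ℕ, ∀ k l : ℕ, (∀ i, a i ≤ d) → k ≤ d → l ≤ d →
      (k = l + 1 ∨ l = k + 1) → |gammaLabel d f a k - gammaLabel d f a l| ≤ 1) := by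
  have hd' : (0 : ℚ) < d := by exact_mod_cast hd
  refine ⟨fun a b k ha _ hk hab => ?_, fun a k l ha _ _ hkl => ?_⟩
  · rw [gammaLabel_sub_gammaLabel]
    refine abs_one_sub_mul_add_mul_le (by positivity)
      (div_le_one_of_le₀ (by exact_mod_cast hk) hd'.le) ?_ (abs_barMap_sub_barMap_le hf hab)
    exact (abs_interp_sub_interp_le hf ha hab).trans
      (div_le_one_of_le₀ (by exact_mod_cast hd) hd'.le)
  · have hvert : ∀ l, |gammaLabel d f a (l + 1) - gammaLabel d f a l| ≤ 1 := fun l => by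
      rw [gammaLabel_succ_sub, abs_div, abs_sub_comm, Nat.abs_cast]
      exact div_le_one_of_le₀ (abs_interp_sub_le hf ha _) hd'.le
    rcases hkl with rfl | rfl
    · exact hvert l
    · rw [abs_sub_comm]; exact hvert k
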